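/- arXiv:0801.1627 — 5 statements merged into one kernel-verified Lean document; each statement's English description precedes it below -/
import Mathlib

section
/- Fix integers l ≥ 1, n ≥ 0, d ≥ 1, a tuple c = (c_0,…,c_{l−1}) of nonnegative integers with c_0+…+c_{l−1} = d, a tuple r = (r_0,…,r_{l−1}) of integers with r_0+…+r_{l−1} = 0, and a permutation w of {0,…,l−1}. For 0 ≤ p ≤ l−1 set m_p = c_0+…+c_p and s_p = d·r_p − d·r_{l−1} + m_p, and for 0 ≤ t ≤ d set I_t = {p ∈ {0,…,l−1} : m_p = t}. For an l-multipartition λ = (λ^{(0)},…,λ^{(l−1)}) of n let C(λ)^p = β^{r_p}(λ^{(w^{−1}(p))}). Then for any two l-multipartitions λ, μ of n the following are equivalent: (1) C(λ)_{[t]} = C(μ)_{[t]} as multisets for every 0 ≤ t ≤ d (i.e. λ and μ have the same J-heart); (2) Σ_{p=0}^{l−1} x^{s_p}·Res_{λ^{(w^{−1}(p))}}(x^d) = Σ_{p=0}^{l−1} x^{s_p}·Res_{μ^{(w^{−1}(p))}}(x^d) in ℤ[x, x^{−1}], where Res_ν(x^d) denotes the image of Res_ν(x) under the substitution x ↦ x^d.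 -/
/-- A partition: a weakly decreasing, eventually-zero sequence of naturals.
`part i` is the `(i+1)`-st part `λ_{i+1}`. -/
structure PartitionSeq where
  part : ℕ → ℕ
  antitone : Antitone part
  eventually_zero : ∃ N, ∀ i ≥ N, part i = 0

/-- The length `L(λ)`: the number of nonzero parts. -/
noncomputable def PartitionSeq.length (lam : PartitionSeq) : ℕ :=
  Set.ncard {i : ℕ | lam.part i ≠ 0}

/-- The size `|λ|`: the sum of the parts. -/
noncomputable def PartitionSeq.size (lam : PartitionSeq) : ℕ :=
  ∑ i ∈ Finset.range lam.length, lam.part i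

/-- `beta lam r i` is the `(i+1)`-st entry `β^r(λ)_{i+1} = λ_{i+1} + r - i` of the
`r`-shifted β-number (0-indexed version of `β^r(λ)_i = λ_i + r + 1 - i`). -/
def PartitionSeq.beta (lam : PartitionSeq) (r : ℤ) (i : ℕ) : ℤ :=
  (lam.part i : ℤ) + r - (i : ℤ)

/-- The residue `Res_λ(x) = Σ_{(a,b) ∈ Y(λ)} x^{cont(a,b)}` as a Laurent polynomial. -/
noncomputable def PartitionSeq.residue (lam : PartitionSeq) : LaurentPolynomial ℤ :=
  ∑ a ∈ Finset.range lam.length, ∑ b ∈ Finset.range (lam.part a),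
    LaurentPolynomial.T ((b : ℤ) - (a : ℤ))

/-- The residue with `x ↦ x^d` substituted: `Res_λ(x^d)`. -/
noncomputable def PartitionSeq.residuePow (lam : PartitionSeq) (d : ℕ) : LaurentPolynomial ℤ :=
  ∑ a ∈ Finset.range lam.length, ∑ b ∈ Finset.range (lam.part a),
    LaurentPolynomial.T ((d : ℤ) * ((b : ℤ) - (a : ℤ)))

/-- A strictly decreasing integer sequence `C` stabilises with respect to `r` if
`C_i = r + 1 - i` for all large `i` (0-indexed: `C i = r - i`). -/
def Stabilises (C : ℕ → ℤ) (r : ℤ) : Prop :=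
  ∃ K : ℕ, ∀ i ≥ K, C i = r - (i : ℤ)

/-- The partial sum `m_p(c) = c_0 + ⋯ + c_p`. -/
def psum {l : ℕ} (c : Fin l → ℕ) (p : Fin l) : ℕ := ∑ j ∈ Finset.Iic p, c j

/-- The multiplicity at `z ∈ ℤ` of the multiset `C_{[t]}`, for `0 ≤ t ≤ d`,
where `I_t = {p : m_p(c) = t}`; for `t = 0` or `t = d` this is the common multiset
`C_{[0]} = C_{[d]}` built from `I_0` (with entries shifted by `-1`) and `I_d`. -/
noncomputable def multAt {l : ℕ} (d : ℕ) (c : Fin l → ℕ) (C : Fin l → ℕ → ℤ)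
    (t : ℕ) (z : ℤ) : ℕ :=
  if t = 0 ∨ t = d then
    Nat.card {pi : Fin l × ℕ // psum c pi.1 = 0 ∧ C pi.1 pi.2 - 1 = z} +
    Nat.card {pi : Fin l × ℕ // psum c pi.1 = d ∧ C pi.1 pi.2 = z}
  else
    Nat.card {pi : Fin l × ℕ // psum c pi.1 = t ∧ C pi.1 pi.2 = z}

/-- The set `χ(C) = {l(C^q_i − 1) + q + 1 : 0 ≤ q ≤ l−1, i ≥ 1} ⊆ ℤ`. -/
def chiSet (l : ℕ) (C : Fin l → ℕ → ℤ) : Set ℤ :=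
  {z : ℤ | ∃ (q : Fin l) (i : ℕ), z = (l : ℤ) * (C q i - 1) + (q : ℤ) + 1}

/-- `Ct` is an admissible tuple for `C` (with respect to the data `d`, `c`):
(i) each `Ct p` is strictly decreasing; (ii) the multisets `Ct_{[t]}` and `C_{[t]}`
agree for all `0 ≤ t ≤ d`; (iii) for `0 ≠ p ∈ J = {j : c_j = 0}`, every term of `Ct p`
is a term of `Ct (p-1)`; (iv) if `0 ∈ J`, then for every term `z` of `Ct 0`,
`z - 1` is a term of `Ct (l-1)`. -/
def IsAdmissible {l : ℕ} (d : ℕ) (c : Fin l → ℕ) (C Ct : Fin l → ℕ → ℤ) : Prop :=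
  (∀ p : Fin l, StrictAnti (Ct p)) ∧
  (∀ t ≤ d, ∀ z : ℤ, multAt d c Ct t z = multAt d c C t z) ∧
  (∀ p : Fin l, c p = 0 → (p : ℕ) ≠ 0 →
    ∀ i : ℕ, ∃ i' : ℕ,
      Ct ⟨(p : ℕ) - 1, lt_of_le_of_lt (Nat.sub_le _ _) p.isLt⟩ i' = Ct p i) ∧
  (∀ h0 : 0 < l, c ⟨0, h0⟩ = 0 →
    ∀ i : ℕ, ∃ i' : ℕ, Ct ⟨l - 1, Nat.sub_lt h0 Nat.one_pos⟩ i' = Ct ⟨0, h0⟩ i - 1)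

/-- The Young diagram of a partition, with 0-indexed nodes:
`(a,b)` is a node iff `b < λ_{a+1}`. -/
def YoungSet (lam : PartitionSeq) : Set (ℕ × ℕ) :=
  {ab : ℕ × ℕ | ab.2 < lam.part ab.1}

/-- `S` is the Young diagram of the partition `mu`. -/
def IsDiagramOf (S : Set (ℕ × ℕ)) (mu : PartitionSeq) : Prop :=
  S = YoungSet mu

/-- The node `ab` of `Y(λ)` is removable: deleting it leaves the Young diagram
of some partition. -/
def IsRemovableNode (lam : PartitionSeq) (ab : ℕ × ℕ) : Prop :=
  ab ∈ YoungSet lam ∧ ∃ mu : PartitionSeq, IsDiagramOf (YoungSet lam \ {ab}) mu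

/-- The node `ab` of `Y(λ)` is `j`-removable (mod `l`): it is removable and its
content is congruent to `j` mod `l`. -/
def IsJRemovable (l j : ℕ) (lam : PartitionSeq) (ab : ℕ × ℕ) : Prop :=
  IsRemovableNode lam ab ∧ ((ab.2 : ℤ) - (ab.1 : ℤ)) ≡ (j : ℤ) [ZMOD (l : ℤ)]

/-- The node `ab` is `J`-removable for a set `J` of residues: `j`-removable
for some `j ∈ J`. -/
def IsSetRemovable (l : ℕ) (J : Set ℕ) (lam : PartitionSeq) (ab : ℕ × ℕ) : Prop :=
  ∃ j ∈ J, IsJRemovable l j lam ab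

/-- `mu` is obtained from `lam` by deleting a single `J`-removable node. -/
def RemoveStep (l : ℕ) (J : Set ℕ) (lam mu : PartitionSeq) : Prop :=
  ∃ ab : ℕ × ℕ, IsSetRemovable l J lam ab ∧ IsDiagramOf (YoungSet lam \ {ab}) mu

/-- The partial sum `m_p(θ) = θ_0 + ⋯ + θ_p` of a rational vector. -/
def psumQ {l : ℕ} (θ : Fin l → ℚ) (p : Fin l) : ℚ := ∑ j ∈ Finset.Iic p, θ j

/-- The map `s_i : ℚ^l → ℚ^l` (for `1 ≤ i ≤ l-1`). -/
def sAct {l : ℕ} (i : Fin l) (θ : Fin l → ℚ) : Fin l → ℚ := fun p =>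
  if (p : ℕ) = (i : ℕ) - 1 then θ p + θ i
  else if p = i then -θ i
  else if (p : ℕ) = (i : ℕ) + 1 then θ i + θ p
  else θ p

/-! Multiplying by `x^d - 1` telescopes every row of `Res_ν(x^d)`, so that
`x^{d r_{l-1}} (x^d - 1) Σ_p x^{s_p} Res_{λ^{(w⁻¹ p)}}(x^d)` is
`Σ_{p, i < N} x^{m_p + d C(λ)^p_i}` minus the same sum for the empty multipartition.
The coefficient of `x^e` there counts the pairs `(p, i)` with `m_p + d C^p_i = e`.
Writing `e = t + d z` with `1 ≤ t ≤ d`, the bound `0 ≤ m_p ≤ d` forces `m_p = t` and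
`C^p_i = z`, or `t = d`, `m_p = 0` and `C^p_i = z + 1`: these are exactly the pairs counted
by the multiplicity of `z` in `C_{[t]}`. Beyond the lengths of the partitions the β-numbers
of `λ` and `μ` agree, so truncating at `N` changes both counts equally. -/

open LaurentPolynomial Finset

lemma PartitionSeq.part_eq_zero_of_length_le (lam : PartitionSeq) {a : ℕ}
    (h : lam.length ≤ a) : lam.part a = 0 := by
  by_contra hne
  obtain ⟨N, hN⟩ := lam.eventually_zero
  have hfin : {i : ℕ | lam.part i ≠ 0}.Finite :=
    (Set.finite_Iio N).subset fun i hi => by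
      by_contra hlt
      exact hi (hN i (not_lt.mp hlt))
  have hsub : Set.Iic a ⊆ {i : ℕ | lam.part i ≠ 0} := fun j hj => by
    have := lam.antitone (Set.mem_Iic.mp hj)
    simp only [Set.mem_ofPred_eq]
    omega
  have hcard : (Set.Iic a).ncard = a + 1 := by
    rw [← coe_Iic, Set.ncard_coe_finset, Nat.card_Iic]
  have : a + 1 ≤ lam.length := hcard ▸ Set.ncard_le_ncard hsub hfin
  omega

lemma PartitionSeq.beta_strictAnti (lam : PartitionSeq) (r : ℤ) : StrictAnti (lam.beta r) :=
  fun i j hij => by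
    have := lam.antitone hij.le
    simp only [PartitionSeq.beta]
    omega

lemma PartitionSeq.beta_of_length_le (lam : PartitionSeq) (r : ℤ) {i : ℕ}
    (h : lam.length ≤ i) : lam.beta r i = r - i := by
  simp [PartitionSeq.beta, lam.part_eq_zero_of_length_le h]

lemma psum_le {l d : ℕ} {c : Fin l → ℕ} (hc : ∑ j, c j = d) (p : Fin l) : psum c p ≤ d :=
  hc ▸ sum_le_sum_of_subset (subset_univ _)

lemma add_mul_eq_add_mul_iff {d m t : ℤ} (hm0 : 0 ≤ m) (hmd : m ≤ d) (ht0 : 0 < t)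
    (htd : t ≤ d) (x z : ℤ) :
    m + d * x = t + d * z ↔ (m = t ∧ x = z) ∨ (t = d ∧ m = 0 ∧ x = z + 1) := by
  constructor
  · intro h
    have hk : d * (x - z) = t - m := by linarith
    rcases lt_trichotomy (x - z) 0 with hneg | hzero | hpos
    · nlinarith
    · left
      constructor <;> nlinarith
    · right
      have h1 : d ≤ d * (x - z) := by nlinarith
      have h2 : x - z ≤ 1 := by nlinarith
      refine ⟨by linarith, by linarith, by linarith⟩
  · rintro (⟨rfl, rfl⟩ | ⟨rfl, rfl, rfl⟩) <;> ring

lemma Set.ncard_eq_ncard_iff_ncard_inter_eq_of_diff_eq {α : Type*} {s t u : Set α}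
    (hs : s.Finite) (ht : t.Finite) (h : s \ u = t \ u) :
    s.ncard = t.ncard ↔ (s ∩ u).ncard = (t ∩ u).ncard := by
  rw [← Set.ncard_inter_add_ncard_sdiff_eq_ncard s u hs,
    ← Set.ncard_inter_add_ncard_sdiff_eq_ncard t u ht, h, add_left_inj]

section ExponentFiber

variable {l : ℕ} (d : ℕ) (c : Fin l → ℕ)

def exponentFiber (C : Fin l → ℕ → ℤ) (e : ℤ) : Set (Fin l × ℕ) :=
  {pi | (psum c pi.1 : ℤ) + d * C pi.1 pi.2 = e}

noncomputable def exponentPoly (C : Fin l → ℕ → ℤ) (N : ℕ) : LaurentPolynomial ℤ :=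
  ∑ pi ∈ univ ×ˢ range N, T ((psum c pi.1 : ℤ) + d * C pi.1 pi.2)

variable {d c}

lemma exponentFiber_finite (hd : d ≠ 0) {C : Fin l → ℕ → ℤ} (hC : ∀ p, (C p).Injective)
    (e : ℤ) : (exponentFiber d c C e).Finite :=
  Set.Finite.of_finite_image (f := Prod.fst) (Set.toFinite _)
    fun ⟨p, i⟩ hi ⟨q, j⟩ hj hpq => by
      obtain rfl : p = q := hpq
      simp only [exponentFiber, Set.mem_ofPred_eq] at hi hj
      have : C p i = C p j := mul_left_cancel₀ (Int.natCast_ne_zero.mpr hd) (by linarith)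
      rw [hC p this]

lemma multAt_zero (C : Fin l → ℕ → ℤ) (z : ℤ) : multAt d c C 0 z = multAt d c C d z := by
  simp [multAt]

lemma multAt_eq_ncard_exponentFiber (hc : ∑ j, c j = d) {C : Fin l → ℕ → ℤ}
    (hC : ∀ p, (C p).Injective) {t : ℕ} (ht0 : 0 < t) (htd : t ≤ d) (z : ℤ) :
    multAt d c C t z = (exponentFiber d c C (t + d * z)).ncard := by
  have hfiber : ∀ pi, pi ∈ exponentFiber d c C (t + d * z) ↔
      (psum c pi.1 = t ∧ C pi.1 pi.2 = z) ∨
        (t = d ∧ psum c pi.1 = 0 ∧ C pi.1 pi.2 = z + 1) := by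
    intro pi
    rw [exponentFiber, Set.mem_ofPred_eq, add_mul_eq_add_mul_iff (Nat.cast_nonneg _)
      (by exact_mod_cast psum_le hc pi.1) (by exact_mod_cast ht0) (by exact_mod_cast htd)]
    simp only [Nat.cast_inj, Nat.cast_eq_zero]
  rcases htd.lt_or_eq with htd | htd
  · rw [multAt, if_neg (by omega), ← Nat.card_coe_set_eq]
    congr
    ext pi
    rw [hfiber]
    simp only [htd.ne, false_and, or_false]
  · obtain rfl : d = t := htd.symm
    have hunion : exponentFiber d c C (d + d * z) =
        {pi | psum c pi.1 = 0 ∧ C pi.1 pi.2 - 1 = z} ∪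
          {pi | psum c pi.1 = d ∧ C pi.1 pi.2 = z} := by
      ext pi
      rw [hfiber]
      simp only [true_and, Set.mem_union, Set.mem_ofPred_eq, sub_eq_iff_eq_add]
      tauto
    have hfin := exponentFiber_finite (c := c) ht0.ne' hC (d + d * z)
    rw [hunion] at hfin
    rw [hunion, Set.ncard_union_eq ?_ (hfin.subset Set.subset_union_left)
      (hfin.subset Set.subset_union_right), multAt, if_pos (Or.inr rfl)]
    · rfl
    · exact Set.disjoint_left.mpr fun pi h0 ht => by
        simp only [Set.mem_ofPred_eq] at h0 ht
        omega

lemma forall_multAt_eq_iff (hd : 0 < d) (hc : ∑ j, c j = d) {C C' : Fin l → ℕ → ℤ}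
    (hC : ∀ p, (C p).Injective) (hC' : ∀ p, (C' p).Injective) :
    (∀ t ≤ d, ∀ z, multAt d c C t z = multAt d c C' t z) ↔
      ∀ e, (exponentFiber d c C e).ncard = (exponentFiber d c C' e).ncard := by
  constructor
  · intro h e
    have hd' : (0 : ℤ) < d := by exact_mod_cast hd
    have h1 := Int.emod_nonneg (e - 1) hd'.ne'
    have h2 := Int.emod_lt_of_pos (e - 1) hd'
    have h3 := Int.mul_ediv_add_emod (e - 1) d
    obtain ⟨t, z, ht0, htd, rfl⟩ : ∃ t : ℕ, ∃ z : ℤ, 0 < t ∧ t ≤ d ∧ e = t + d * z :=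
      ⟨((e - 1) % d + 1).toNat, (e - 1) / d, by omega, by omega,
        by rw [Int.toNat_of_nonneg (by omega)]; linarith⟩
    rw [← multAt_eq_ncard_exponentFiber hc hC ht0 htd,
      ← multAt_eq_ncard_exponentFiber hc hC' ht0 htd]
    exact h t htd z
  · intro h t htd z
    rcases Nat.eq_zero_or_pos t with rfl | ht0
    · rw [multAt_zero, multAt_zero, multAt_eq_ncard_exponentFiber hc hC hd le_rfl,
        multAt_eq_ncard_exponentFiber hc hC' hd le_rfl, h]
    · rw [multAt_eq_ncard_exponentFiber hc hC ht0 htd,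
        multAt_eq_ncard_exponentFiber hc hC' ht0 htd, h]

lemma coeff_exponentPoly (C : Fin l → ℕ → ℤ) (N : ℕ) (e : ℤ) :
    (exponentPoly d c C N).coeff e = (exponentFiber d c C e ∩ {pi | pi.2 < N}).ncard := by
  classical
  have hset : exponentFiber d c C e ∩ {pi | pi.2 < N} =
      ↑((univ ×ˢ range N).filter fun pi => (psum c pi.1 : ℤ) + d * C pi.1 pi.2 = e) := by
    ext pi
    simp [exponentFiber, and_comm]
  rw [hset, Set.ncard_coe_finset, card_filter, exponentPoly,
    AddMonoidAlgebra.coeff_sum, Finsupp.finsetSum_apply]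
  push_cast
  exact sum_congr rfl fun pi _ => T_apply _ _

lemma exponentPoly_eq_iff (hd : d ≠ 0) {C C' : Fin l → ℕ → ℤ} (hC : ∀ p, (C p).Injective)
    (hC' : ∀ p, (C' p).Injective) {N : ℕ} (htail : ∀ p i, N ≤ i → C p i = C' p i) :
    exponentPoly d c C N = exponentPoly d c C' N ↔
      ∀ e, (exponentFiber d c C e).ncard = (exponentFiber d c C' e).ncard := by
  rw [LaurentPolynomial.ext_iff]
  refine forall_congr' fun e => ?_
  rw [coeff_exponentPoly, coeff_exponentPoly, Nat.cast_inj,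
    Set.ncard_eq_ncard_iff_ncard_inter_eq_of_diff_eq (exponentFiber_finite hd hC e)
      (exponentFiber_finite hd hC' e)]
  ext ⟨p, i⟩
  simp only [exponentFiber, Set.mem_sdiff, Set.mem_ofPred_eq, not_lt, and_congr_left_iff]
  intro hi
  rw [htail p i hi]

end ExponentFiber

lemma PartitionSeq.T_sub_one_mul_residuePow (lam : PartitionSeq) (d : ℕ) {N : ℕ}
    (hN : lam.length ≤ N) :
    (T d - 1) * lam.residuePow d =
      ∑ a ∈ range N, (T (d * ((lam.part a : ℤ) - a)) - T (-(d * a))) := by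
  have hrow : ∀ a m : ℕ, (T d - 1) * ∑ b ∈ range m, (T (d * ((b : ℤ) - a)) : ℤ[T;T⁻¹]) =
      T (d * ((m : ℤ) - a)) - T (-(d * a)) := by
    intro a m
    have hT : ∀ b : ℕ, (T (d * ((b : ℤ) - a)) : ℤ[T;T⁻¹]) = T (-(d * a)) * T d ^ b := by
      intro b
      rw [T_pow, ← T_add]
      ring_nf
    simp_rw [hT, ← mul_sum, mul_left_comm, mul_geom_sum, mul_sub, T_pow, ← T_add, mul_one]
  calc (T d - 1) * lam.residuePow d
      = ∑ a ∈ range lam.length, (T (d * ((lam.part a : ℤ) - a)) - T (-(d * a))) := by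
        rw [PartitionSeq.residuePow, mul_sum]
        exact sum_congr rfl fun a _ => hrow a _
    _ = _ := sum_subset (range_subset_range.mpr hN) fun a _ ha => by
        rw [lam.part_eq_zero_of_length_le (by simpa using ha)]
        simp

lemma T_mul_T_sub_one_mul_sum_residuePow {l : ℕ} (d : ℕ) (c : Fin l → ℕ)
    (Ξ : Fin l → PartitionSeq) (ρ : Fin l → ℤ) (k : ℤ) {N : ℕ}
    (hN : ∀ p, (Ξ p).length ≤ N) :
    T k * ((T d - 1) * ∑ p, T (d * ρ p - k + psum c p) * (Ξ p).residuePow d) =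
      exponentPoly d c (fun p => (Ξ p).beta (ρ p)) N -
        exponentPoly d c (fun p i => ρ p - i) N := by
  simp_rw [exponentPoly, sum_product, ← sum_sub_distrib, mul_sum]
  refine sum_congr rfl fun p _ => ?_
  rw [mul_left_comm (T d - 1), ← mul_assoc, ← T_add,
    (Ξ p).T_sub_one_mul_residuePow d (hN p), mul_sum]
  refine sum_congr rfl fun a _ => ?_
  rw [mul_sub, ← T_add, ← T_add, PartitionSeq.beta]
  congr 2 <;> ring

lemma sum_T_mul_residuePow_eq_iff {l d : ℕ} (hd : d ≠ 0) (c : Fin l → ℕ)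
    {Ξ Ξ' : Fin l → PartitionSeq} (ρ : Fin l → ℤ) (k : ℤ) {N : ℕ}
    (hN : ∀ p, (Ξ p).length ≤ N) (hN' : ∀ p, (Ξ' p).length ≤ N) :
    ∑ p, T (d * ρ p - k + psum c p) * (Ξ p).residuePow d =
        ∑ p, T (d * ρ p - k + psum c p) * (Ξ' p).residuePow d ↔
      exponentPoly d c (fun p => (Ξ p).beta (ρ p)) N =
        exponentPoly d c (fun p => (Ξ' p).beta (ρ p)) N := by
  have hTd : (T d : ℤ[T;T⁻¹]) ≠ 1 := fun h => by
    have := congrArg (·.coeff (d : ℤ)) h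
    simp [← T_zero] at this
    omega
  have hu : T k * (T d - 1 : ℤ[T;T⁻¹]) ≠ 0 :=
    mul_ne_zero (isUnit_T k).ne_zero (sub_ne_zero.mpr hTd)
  rw [← mul_right_inj' hu, mul_assoc, mul_assoc,
    T_mul_T_sub_one_mul_sum_residuePow d c Ξ ρ k hN,
    T_mul_T_sub_one_mul_sum_residuePow d c Ξ' ρ k hN', sub_left_inj]

theorem statement0 (l d : ℕ) (hl : 1 ≤ l) (hd : 1 ≤ d)
    (c : Fin l → ℕ) (hc : ∑ j, c j = d)
    (r : Fin l → ℤ)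
    (w : Equiv.Perm (Fin l))
    (Λ M : Fin l → PartitionSeq) :
    (∀ t ≤ d, ∀ z : ℤ,
        multAt d c (fun p => (Λ (w⁻¹ p)).beta (r p)) t z =
          multAt d c (fun p => (M (w⁻¹ p)).beta (r p)) t z) ↔
      (∑ p : Fin l,
          LaurentPolynomial.T
              ((d : ℤ) * r p - (d : ℤ) * r ⟨l - 1, by omega⟩ + (psum c p : ℤ)) *
            (Λ (w⁻¹ p)).residuePow d =
        ∑ p : Fin l,
          LaurentPolynomial.T
              ((d : ℤ) * r p - (d : ℤ) * r ⟨l - 1, by omega⟩ + (psum c p : ℤ)) *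
            (M (w⁻¹ p)).residuePow d) := by
  have hN : ∀ q, (Λ q).length + (M q).length ≤ ∑ q, ((Λ q).length + (M q).length) :=
    fun q => single_le_sum (f := fun q => (Λ q).length + (M q).length)
      (fun _ _ => Nat.zero_le _) (mem_univ q)
  have hΛ : ∀ p, (Λ (w⁻¹ p)).length ≤ ∑ q, ((Λ q).length + (M q).length) :=
    fun p => (Nat.le_add_right _ _).trans (hN _)
  have hM : ∀ p, (M (w⁻¹ p)).length ≤ ∑ q, ((Λ q).length + (M q).length) :=
    fun p => (Nat.le_add_left _ _).trans (hN _)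
  refine (forall_multAt_eq_iff hd hc (fun p => ((Λ _).beta_strictAnti _).injective)
    (fun p => ((M _).beta_strictAnti _).injective)).trans ?_
  rw [sum_T_mul_residuePow_eq_iff (by omega) c r _ hΛ hM]
  refine (exponentPoly_eq_iff (by omega) (fun p => ((Λ _).beta_strictAnti _).injective)
    (fun p => ((M _).beta_strictAnti _).injective) fun p i hi => ?_).symm
  rw [PartitionSeq.beta_of_length_le _ _ ((hΛ p).trans hi),
    PartitionSeq.beta_of_length_le _ _ ((hM p).trans hi)]
end

section
/- Fix integers l ≥ 1, n ≥ 0, d ≥ 1, a tuple c = (c_0,…,c_{l−1}) of nonnegative integers with c_0+…+c_{l−1} = d, a tuple r = (r_0,…,r_{l−1}) of integers with r_0+…+r_{l−1} = 0, and a permutation w of {0,…,l−1}; set m_p = c_0+…+c_p, J = {j ∈ {0,…,l−1} : c_j = 0}, and I_t = {p : m_p = t} for 0 ≤ t ≤ d. Let λ be an l-multipartition of n and C = C(λ) the tuple with C^p = β^{r_p}(λ^{(w^{−1}(p))}). Let C̃ be an admissible tuple for C, let ν be the unique partition with β(ν) enumerating χ(C) in decreasing order, and let μ be the unique partition with β(μ)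 enumerating χ(C̃) in decreasing order. Then: there exists a finite sequence of partitions ν = ν_0, ν_1, …, ν_k in which each ν_{j+1} is obtained from ν_j by deleting a single J-removable node and in which ν_k has no J-removable node; and EVERY such sequence ends with ν_k = μ. In particular the J-heart of ν (the partition obtained from ν by removing J-removable nodes as often as possible) is well defined and equals μ. -/
/-!
Read partitions through their β-sets on the integer abacus. Removing a `J`-removable node of
content `x` moves a bead from `x + 1` to the free position `x`. Grade the positions by
`abacusLevel c`, which is monotone and rises by `c_{x mod l}` from `x` to `x + 1`: these moves are
exactly the moves of a bead to the next lower position of the same level. So the number of beads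
on each level never changes, and at the end of any chain of removals the beads of every level are
packed at its bottom, which determines the β-set by those numbers. The set `χ(C̃)` is packed by
conditions (iii) and (iv) of admissibility, and condition (ii) says that `χ(C)` and `χ(C̃)` have
the same number of beads on every level. Chains terminate since each removal shrinks the Young
diagram.
-/

section Abacus

variable {α : Type*} {L : ℤ → α}

def IsPacked (L : ℤ → α) (B : Set ℤ) : Prop :=
  ∀ z ∈ B, L (z - 1) = L z → z - 1 ∈ B

noncomputable def fiberCount (L : ℤ → α) (B : Set ℤ) (s : α) : ℕ :=
  (B ∩ L ⁻¹' {s}).ncard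

lemma fiberCount_image_swap {z : ℤ} (hz : L (z - 1) = L z) (B : Set ℤ) :
    fiberCount L (Equiv.swap (z - 1) z '' B) = fiberCount L B := by
  have hswap : L ∘ Equiv.swap (z - 1) z = L := by
    funext x
    simp only [Function.comp_apply, Equiv.swap_apply_def]
    split_ifs with h₁ h₂
    · rw [h₁, hz]
    · rw [h₂, hz]
    · rfl
  funext s
  rw [fiberCount, fiberCount, ← Set.image_inter_preimage, ← Set.preimage_comp, hswap,
    Set.ncard_image_of_injective _ (Equiv.injective _)]

variable [PartialOrder α] {B B' : Set ℤ}

lemma IsPacked.mem_of_le (hL : Monotone L) (hB : IsPacked L B) {z : ℤ} (hz : z ∈ B) :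
    ∀ w ≤ z, L w = L z → w ∈ B := by
  refine Int.leInductionDown (fun _ => hz) fun n hn ih hLn => ?_
  have hn' : L n = L z := le_antisymm (hL hn) (hLn ▸ hL (by omega))
  exact hB n (ih hn') (hLn.trans hn'.symm)

/-- A packed `B` meets every level in an initial segment of it. -/
lemma IsPacked.mem_iff (hL : Monotone L) (hB : IsPacked L B) {z : ℤ}
    (hfin : (L ⁻¹' {L z}).Finite) :
    z ∈ B ↔ ({w | w ≤ z} ∩ L ⁻¹' {L z}).ncard ≤ fiberCount L B (L z) := by
  have hBfin : (B ∩ L ⁻¹' {L z}).Finite := hfin.subset Set.inter_subset_right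
  constructor
  · intro hz
    exact Set.ncard_le_ncard (fun w ⟨hw, hLw⟩ => ⟨hB.mem_of_le hL hz w hw hLw, hLw⟩) hBfin
  · intro hcard
    by_contra hz
    have hsub : B ∩ L ⁻¹' {L z} ⊆ ({w | w ≤ z} ∩ L ⁻¹' {L z}) \ {z} := by
      rintro w ⟨hw, hLw⟩
      refine ⟨⟨show w ≤ z from not_lt.1 fun hzw => hz ?_, hLw⟩,
        fun hwz => hz (hwz ▸ hw)⟩
      exact hB.mem_of_le hL hw z hzw.le hLw.symm
    have hle := Set.ncard_le_ncard hsub (hfin.subset Set.inter_subset_right).sdiff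
    have hlt := Set.ncard_sdiff_singleton_lt_of_mem (s := {w | w ≤ z} ∩ L ⁻¹' {L z})
      ⟨le_refl z, rfl⟩ (hfin.subset Set.inter_subset_right)
    unfold fiberCount at hcard
    omega

lemma IsPacked.eq_of_fiberCount_eq (hL : Monotone L) (hfin : ∀ s, (L ⁻¹' {s}).Finite)
    (hB : IsPacked L B) (hB' : IsPacked L B') (h : fiberCount L B = fiberCount L B') :
    B = B' := by
  ext z
  rw [hB.mem_iff hL (hfin _), hB'.mem_iff hL (hfin _), h]

end Abacus

namespace PartitionSeq

lemma ext {lam mu : PartitionSeq} (h : lam.part = mu.part) : lam = mu := by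
  cases lam; cases mu; cases h; rfl

lemma beta_strictAnti_s1 (lam : PartitionSeq) (r : ℤ) : StrictAnti (lam.beta r) := by
  intro i j hij
  have := lam.antitone hij.le
  simp only [beta]
  omega

def betaSet (lam : PartitionSeq) : Set ℤ := Set.range (lam.beta 0)

lemma betaSet_injective : Function.Injective betaSet := by
  intro lam mu h
  have hβ : lam.beta 0 = mu.beta 0 :=
    (StrictMono.range_inj (γ := ℤᵒᵈ) (lam.beta_strictAnti_s1 0) (mu.beta_strictAnti_s1 0)).1 h
  refine ext (funext fun i => ?_)
  have := congrFun hβ i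
  simp only [beta] at this
  omega

lemma finite_youngSet (lam : PartitionSeq) : (YoungSet lam).Finite := by
  obtain ⟨N, hN⟩ := lam.eventually_zero
  refine ((Set.finite_Iio N).prod (Set.finite_Iio (lam.part 0))).subset ?_
  rintro ⟨a, b⟩ (hab : b < lam.part a)
  refine ⟨?_, lt_of_lt_of_le hab (lam.antitone (Nat.zero_le a))⟩
  by_contra ha
  simp [hN a (not_lt.1 ha)] at hab

def removeCorner (lam : PartitionSeq) (a : ℕ) (h : lam.part (a + 1) < lam.part a) :
    PartitionSeq where
  part := Function.update lam.part a (lam.part a - 1)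
  antitone := by
    intro i j hij
    simp only [Function.update_apply]
    split_ifs with hj hi hi
    · omega
    · have := lam.antitone (show i ≤ a by omega); omega
    · have := lam.antitone (show a + 1 ≤ j by omega); omega
    · exact lam.antitone hij
  eventually_zero := by
    obtain ⟨N, hN⟩ := lam.eventually_zero
    refine ⟨N + a + 1, fun i hi => ?_⟩
    rw [Function.update_of_ne (by omega)]
    exact hN i (by omega)

lemma youngSet_removeCorner (lam : PartitionSeq) (a : ℕ) (h : lam.part (a + 1) < lam.part a) :
    YoungSet (lam.removeCorner a h) = YoungSet lam \ {(a, lam.part a - 1)} := by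
  ext ⟨i, y⟩
  simp only [YoungSet, removeCorner, Set.mem_sdiff, Set.mem_ofPred_eq, Set.mem_singleton_iff,
    Prod.mk.injEq, Function.update_apply]
  split_ifs with hi <;> [subst hi; skip] <;> omega

lemma part_eq_update_of_isDiagramOf {lam mu : PartitionSeq} {a b : ℕ}
    (hab : (a, b) ∈ YoungSet lam) (h : IsDiagramOf (YoungSet lam \ {(a, b)}) mu) :
    lam.part a = b + 1 ∧ mu.part = Function.update lam.part a b := by
  have hmem : ∀ i y, y < mu.part i ↔ y < lam.part i ∧ (i, y) ≠ (a, b) := fun i y =>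
    (Set.ext_iff.1 h (i, y)).symm
  have hb : b < lam.part a := hab
  have hmu : mu.part a = b := by
    refine le_antisymm (not_lt.1 fun hlt => ((hmem a b).1 hlt).2 rfl) (not_lt.1 fun hlt => ?_)
    exact lt_irrefl _ ((hmem a _).2 ⟨by omega, by simp [hlt.ne]⟩)
  refine ⟨le_antisymm (not_lt.1 fun hlt => ?_) hb, funext fun i => ?_⟩
  · have := (hmem a (b + 1)).2 ⟨hlt, by simp⟩
    omega
  · rcases eq_or_ne i a with rfl | hi
    · simpa using hmu
    · rw [Function.update_of_ne hi]
      exact eq_of_forall_lt_iff fun y => by simpa [hi] using hmem i y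

variable {l : ℕ} {J : Set ℕ}

/-- `z` is the bead `β_a` of the row `a` that loses its last node, whose content is `z - 1`. -/
lemma exists_betaSet_eq_swap_image_of_removeStep {lam mu : PartitionSeq}
    (h : RemoveStep l J lam mu) :
    ∃ z, (∃ j ∈ J, z - 1 ≡ j [ZMOD l]) ∧
      mu.betaSet = Equiv.swap (z - 1) z '' lam.betaSet := by
  obtain ⟨⟨a, b⟩, ⟨j, hj, ⟨hab, -⟩, hcont⟩, hdiag⟩ := h
  obtain ⟨hrow, hmu⟩ := part_eq_update_of_isDiagramOf hab hdiag
  have hnext : lam.part (a + 1) ≤ b := by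
    simpa [hmu] using mu.antitone (Nat.le_add_right a 1)
  have hz : lam.beta 0 a - 1 = (b : ℤ) - a := by simp only [beta, hrow]; push_cast; ring
  refine ⟨lam.beta 0 a, ⟨j, hj, hz ▸ hcont⟩, ?_⟩
  rw [betaSet, betaSet, ← Set.range_comp]
  congr 1
  funext i
  simp only [Function.comp_apply, beta, hmu, Function.update_apply]
  rcases lt_trichotomy i a with hi | rfl | hi
  · have := lam.antitone hi.le
    rw [if_neg hi.ne, Equiv.swap_apply_of_ne_of_ne] <;> omega
  · rw [if_pos rfl, hrow]
    push_cast
    rw [show (b : ℤ) + 1 + 0 - i = (b : ℤ) + 0 - i + 1 by ring, Equiv.swap_apply_right]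
    ring
  · have := lam.antitone (show a + 1 ≤ i by omega)
    rw [if_neg hi.ne', Equiv.swap_apply_of_ne_of_ne] <;> omega

lemma exists_setRemovable_of_betaSet {lam : PartitionSeq} {z : ℤ} (hz : z ∈ lam.betaSet)
    (hz' : z - 1 ∉ lam.betaSet) (hJ : ∃ j ∈ J, z - 1 ≡ j [ZMOD l]) :
    ∃ ab, IsSetRemovable l J lam ab := by
  obtain ⟨a, rfl⟩ := hz
  have hcorner : lam.part (a + 1) < lam.part a := by
    have hle := lam.antitone (Nat.le_add_right a 1)
    have hne : lam.beta 0 (a + 1) ≠ lam.beta 0 a - 1 := fun he => hz' ⟨a + 1, he⟩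
    simp only [beta] at hne
    omega
  obtain ⟨j, hj, hcont⟩ := hJ
  refine ⟨(a, lam.part a - 1), j, hj, ⟨show lam.part a - 1 < lam.part a by omega,
    lam.removeCorner a hcorner, (youngSet_removeCorner lam a hcorner).symm⟩, ?_⟩
  have : ((lam.part a - 1 : ℕ) : ℤ) - (a : ℤ) = lam.beta 0 a - 1 := by
    simp only [beta]
    omega
  rwa [this]

lemma ncard_youngSet_lt_of_removeStep {lam mu : PartitionSeq} (h : RemoveStep l J lam mu) :
    (YoungSet mu).ncard < (YoungSet lam).ncard := by
  obtain ⟨ab, ⟨-, -, ⟨hab, -⟩, -⟩, hdiag⟩ := h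
  rw [← hdiag]
  exact Set.ncard_sdiff_singleton_lt_of_mem hab lam.finite_youngSet

lemma exists_removal_chain (l : ℕ) (J : Set ℕ) (lam : PartitionSeq) :
    ∃ (k : ℕ) (seq : ℕ → PartitionSeq), seq 0 = lam ∧
      (∀ j < k, RemoveStep l J (seq j) (seq (j + 1))) ∧
      ¬ ∃ ab : ℕ × ℕ, IsSetRemovable l J (seq k) ab := by
  induction hn : (YoungSet lam).ncard using Nat.strong_induction_on generalizing lam with
  | _ n ih =>
  by_cases hrem : ∃ ab, IsSetRemovable l J lam ab
  · obtain ⟨ab, hab⟩ := hrem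
    have ⟨_, _, ⟨_, mu, hmu⟩, _⟩ := hab
    have hstep : RemoveStep l J lam mu := ⟨ab, hab, hmu⟩
    obtain ⟨k, seq, h0, hsteps, hterm⟩ :=
      ih _ (hn ▸ ncard_youngSet_lt_of_removeStep hstep) mu rfl
    refine ⟨k + 1, fun i => Nat.casesOn i lam seq, rfl, fun i hi => ?_, hterm⟩
    cases i with
    | zero => simpa [h0] using hstep
    | succ i => exact hsteps i (by omega)
  · exact ⟨0, fun _ => lam, rfl, by omega, hrem⟩

variable {α : Type*} {L : ℤ → α}

lemma fiberCount_betaSet_of_chain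
    (hLJ : ∀ z, (∃ j ∈ J, z - 1 ≡ j [ZMOD l]) → L (z - 1) = L z) {k : ℕ}
    {seq : ℕ → PartitionSeq} (hsteps : ∀ j < k, RemoveStep l J (seq j) (seq (j + 1))) :
    fiberCount L (seq k).betaSet = fiberCount L (seq 0).betaSet := by
  induction k with
  | zero => rfl
  | succ k ih =>
    obtain ⟨z, hz, hβ⟩ := exists_betaSet_eq_swap_image_of_removeStep (hsteps k k.lt_succ_self)
    rw [hβ, fiberCount_image_swap (hLJ z hz), ih fun j hj => hsteps j (by omega)]

lemma isPacked_betaSet_of_terminal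
    (hLJ : ∀ z, L (z - 1) = L z → ∃ j ∈ J, z - 1 ≡ j [ZMOD l])
    {lam : PartitionSeq} (hterm : ¬ ∃ ab, IsSetRemovable l J lam ab) :
    IsPacked L lam.betaSet :=
  fun z hz hL => by_contra fun hz' => hterm (exists_setRemovable_of_betaSet hz hz' (hLJ z hL))

end PartitionSeq

section Level

variable {l : ℕ} (c : Fin l → ℕ)

def prefixSum (n : ℕ) : ℕ := ∑ j ∈ Finset.univ.filter (fun j : Fin l => (j : ℕ) < n), c j

lemma prefixSum_succ (p : Fin l) : prefixSum c (p + 1) = prefixSum c p + c p := by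
  have : Finset.univ.filter (fun j : Fin l => (j : ℕ) < p + 1) =
      insert p (Finset.univ.filter fun j : Fin l => (j : ℕ) < p) := by
    ext j
    simp only [Finset.mem_filter, Finset.mem_univ, true_and, Finset.mem_insert, Fin.ext_iff]
    omega
  rw [prefixSum, prefixSum, this, Finset.sum_insert (by simp), add_comm]

lemma prefixSum_of_le {n : ℕ} (hn : l ≤ n) : prefixSum c n = ∑ j, c j := by
  rw [prefixSum, Finset.filter_true_of_mem fun j _ => by omega]

lemma psum_eq_prefixSum (p : Fin l) : psum c p = prefixSum c (p + 1) := by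
  refine Finset.sum_congr (Finset.ext fun j => ?_) fun _ _ => rfl
  simp only [Finset.mem_Iic, Finset.mem_filter, Finset.mem_univ, true_and, Fin.le_def]
  omega

/-- The position `l * k + n` (`0 ≤ n < l`) of the abacus gets level `d * k + c_0 + ⋯ + c_{n-1}`,
where `d = ∑ c`. Going from `z` to `z + 1` raises the level by `c_{z mod l}`, so removing a node
of content `z` with residue in `J = {j | c_j = 0}`, i.e. moving a bead from `z + 1` to `z`, is
exactly a move between two positions of the same level. -/
def abacusLevel (z : ℤ) : ℤ := (∑ j, c j : ℕ) * (z / l) + prefixSum c (z % l).toNat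

lemma abacusLevel_mul_add (k : ℤ) {n : ℕ} (hn : n ≤ l) :
    abacusLevel c (l * k + n) = (∑ j, c j : ℕ) * k + prefixSum c n := by
  rcases hn.lt_or_eq with hn | hn
  · obtain ⟨hq, hr⟩ := (Int.ediv_emod_unique (b := l) (by omega)).2
      ⟨(add_comm _ _ : (n : ℤ) + l * k = _), by omega, by omega⟩
    simp [abacusLevel, hq, hr]
  · rw [hn, prefixSum_of_le c le_rfl]
    rcases Nat.eq_zero_or_pos l with hl | hl
    · subst hl
      simp [abacusLevel, prefixSum]
    obtain ⟨hq, hr⟩ := (Int.ediv_emod_unique (a := l * k + l) (b := l) (q := k + 1) (r := 0)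
      (by omega)).2 ⟨by ring, le_rfl, by omega⟩
    simp [abacusLevel, hq, hr, prefixSum]
    ring

lemma abacusLevel_mul_add_succ (k : ℤ) (p : Fin l) :
    abacusLevel c (l * k + p + 1) = abacusLevel c (l * k + p) + c p := by
  have h := abacusLevel_mul_add c k (Nat.succ_le_of_lt p.isLt)
  push_cast at h
  rw [add_assoc, h, abacusLevel_mul_add c k p.isLt.le, prefixSum_succ]
  push_cast
  ring

lemma exists_eq_mul_add {n : ℕ} (hn : 0 < n) (z : ℤ) :
    ∃ (k : ℤ) (p : Fin n), z = n * k + p := by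
  have h0 := Int.emod_nonneg z (by omega : (n : ℤ) ≠ 0)
  have hlt := Int.emod_lt_of_pos z (by omega : (0 : ℤ) < n)
  refine ⟨z / n, ⟨(z % n).toNat, by omega⟩, ?_⟩
  simp only [Int.toNat_of_nonneg h0, Int.mul_ediv_add_emod]

variable {c}

lemma abacusLevel_monotone (hl : 0 < l) : Monotone (abacusLevel c) := by
  refine monotone_int_of_le_succ fun z => ?_
  obtain ⟨k, p, rfl⟩ := exists_eq_mul_add hl z
  rw [abacusLevel_mul_add_succ]
  omega

lemma abacusLevel_add_period (hl : 0 < l) (z : ℤ) :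
    abacusLevel c (z + l) = abacusLevel c z + ∑ j, c j := by
  obtain ⟨k, p, rfl⟩ := exists_eq_mul_add hl z
  rw [show (l : ℤ) * k + p + l = l * (k + 1) + p by ring, abacusLevel_mul_add c _ p.isLt.le,
    abacusLevel_mul_add c _ p.isLt.le]
  push_cast
  ring

lemma finite_abacusLevel_preimage (hl : 0 < l) (hd : 0 < ∑ j, c j) (s : ℤ) :
    (abacusLevel c ⁻¹' {s}).Finite := by
  rcases (abacusLevel c ⁻¹' {s}).eq_empty_or_nonempty with h | ⟨z, hz⟩
  · simp [h]
  refine (Set.finite_Ioo (z - l) (z + l)).subset fun w (hw : abacusLevel c w = s) => ?_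
  have hz : abacusLevel c z = s := hz
  have hup := abacusLevel_add_period (c := c) hl z
  have hdown := abacusLevel_add_period (c := c) hl (z - l)
  rw [sub_add_cancel] at hdown
  have hmono := abacusLevel_monotone (c := c) hl
  constructor
  · by_contra h
    have hle := hmono (not_lt.1 h)
    omega
  · by_contra h
    have hle := hmono (not_lt.1 h)
    omega

lemma abacusLevel_sub_one_eq_iff (hl : 0 < l) (z : ℤ) :
    abacusLevel c (z - 1) = abacusLevel c z ↔
      ∃ j ∈ {j : ℕ | ∃ hj : j < l, c ⟨j, hj⟩ = 0}, z - 1 ≡ j [ZMOD l] := by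
  obtain ⟨k, p, hz⟩ := exists_eq_mul_add hl (z - 1)
  rw [show z = l * k + p + 1 by omega, add_sub_cancel_right, abacusLevel_mul_add_succ]
  constructor
  · intro h
    exact ⟨p, ⟨p.isLt, by simpa using h⟩, by simp [Int.ModEq]⟩
  · rintro ⟨j, ⟨hj, hcj⟩, hmod⟩
    have hp := ((Int.ediv_emod_unique (a := l * k + p) (b := l) (by omega)).2
      ⟨add_comm _ _, by omega, by omega⟩).2
    rw [Int.ModEq, hp, Int.emod_eq_of_lt (by omega) (by omega)] at hmod
    obtain rfl : p = ⟨j, hj⟩ := Fin.ext (show (p : ℕ) = j by omega)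
    rw [hcj, Nat.cast_zero, add_zero]

end Level

section Chi

variable {l : ℕ}

def chiMap (l : ℕ) (C : Fin l → ℕ → ℤ) (pi : Fin l × ℕ) : ℤ :=
  l * (C pi.1 pi.2 - 1) + pi.1 + 1

lemma chiSet_eq_range (C : Fin l → ℕ → ℤ) : chiSet l C = Set.range (chiMap l C) := by
  ext z
  simp [chiSet, chiMap, eq_comm]

lemma chiMap_injective {C : Fin l → ℕ → ℤ} (hC : ∀ p, Function.Injective (C p)) :
    Function.Injective (chiMap l C) := by
  rintro ⟨p, i⟩ ⟨p', i'⟩ h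
  have hl : (0 : ℤ) < l := by have := p.isLt; omega
  have hdivmod := fun (q : Fin l) (j : ℕ) => (Int.ediv_emod_unique (a := chiMap l C (q, j) - 1)
    (q := C q j - 1) (r := q) hl).2 ⟨by simp [chiMap]; ring, by omega, by omega⟩
  obtain ⟨hq, hr⟩ := hdivmod p i
  obtain ⟨hq', hr'⟩ := hdivmod p' i'
  rw [h] at hq hr
  obtain rfl : p = p' := Fin.ext (by omega)
  obtain rfl : i = i' := hC p (by omega)
  rfl

lemma abacusLevel_chiMap (c : Fin l → ℕ) (C : Fin l → ℕ → ℤ) (pi : Fin l × ℕ) :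
    abacusLevel c (chiMap l C pi) = (∑ j, c j : ℕ) * (C pi.1 pi.2 - 1) + psum c pi.1 := by
  have h := abacusLevel_mul_add c (C pi.1 pi.2 - 1) (Nat.succ_le_of_lt pi.1.isLt)
  push_cast at h
  rw [chiMap, add_assoc, h, psum_eq_prefixSum]
  push_cast
  rfl

lemma mul_add_eq_mul_add_iff {d u k m t : ℤ} (hm0 : 0 ≤ m) (hmd : m ≤ d) (ht1 : 1 ≤ t)
    (htd : t ≤ d) :
    d * u + m = d * k + t ↔ (u = k ∧ m = t) ∨ (u = k + 1 ∧ m = 0 ∧ t = d) := by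
  constructor
  · intro h
    rcases lt_trichotomy u k with hu | rfl | hu
    · nlinarith
    · omega
    · have : u = k + 1 := by nlinarith
      subst this
      have : d + m = t := by linarith
      omega
  · rintro (⟨rfl, rfl⟩ | ⟨rfl, rfl, rfl⟩) <;> ring

lemma psum_le_sum (c : Fin l → ℕ) (p : Fin l) : psum c p ≤ ∑ j, c j :=
  Finset.sum_le_sum_of_subset (Finset.subset_univ _)

/-- The entries of `χ(C)` on the abacus level `d k + t` (`1 ≤ t ≤ d`) come from the runners
`p ∈ I_t` at height `k + 1` and, when `t = d`, also from the runners `p ∈ I_0` at height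
`k + 2`: this is the multiset `C_{[t]}` at `k + 1`. -/
lemma fiberCount_chiSet {c : Fin l → ℕ} {d : ℕ} (hl : 0 < l) (hc : ∑ j, c j = d)
    (hd : 0 < d) {C : Fin l → ℕ → ℤ} (hC : ∀ p, Function.Injective (C p)) {t : ℕ}
    (ht1 : 1 ≤ t) (htd : t ≤ d) (k : ℤ) :
    fiberCount (abacusLevel c) (chiSet l C) (d * k + t) = multAt d c C t (k + 1) := by
  have hfin := (finite_abacusLevel_preimage hl (hc ▸ hd) (d * k + t)).preimage
    (chiMap_injective hC).injOn
  rw [fiberCount, chiSet_eq_range, ← Set.image_preimage_eq_range_inter,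
    Set.ncard_image_of_injective _ (chiMap_injective hC)]
  have hlevel : ∀ pi, pi ∈ chiMap l C ⁻¹' (abacusLevel c ⁻¹' {(d : ℤ) * k + t}) ↔
      (psum c pi.1 = t ∧ C pi.1 pi.2 = k + 1) ∨
        (psum c pi.1 = 0 ∧ C pi.1 pi.2 - 1 = k + 1 ∧ t = d) := by
    intro pi
    have := psum_le_sum c pi.1
    rw [Set.mem_preimage, Set.mem_preimage, Set.mem_singleton_iff, abacusLevel_chiMap, hc,
      mul_add_eq_mul_add_iff (by positivity) (by omega) (by omega) (by omega)]
    omega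
  by_cases htd' : t = d
  · subst htd'
    have hpre : chiMap l C ⁻¹' (abacusLevel c ⁻¹' {(t : ℤ) * k + t}) =
        {pi | psum c pi.1 = 0 ∧ C pi.1 pi.2 - 1 = k + 1} ∪
          {pi | psum c pi.1 = t ∧ C pi.1 pi.2 = k + 1} := by
      ext pi
      rw [hlevel]
      simp only [Set.mem_union, Set.mem_ofPred_eq]
      tauto
    rw [hpre] at hfin ⊢
    rw [Set.ncard_union_eq ?_ (hfin.subset Set.subset_union_left)
      (hfin.subset Set.subset_union_right), multAt, if_pos (Or.inr rfl)]
    · rfl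
    · rw [Set.disjoint_left]
      rintro pi ⟨h0, -⟩ ⟨ht, -⟩
      omega
  · have hpre : chiMap l C ⁻¹' (abacusLevel c ⁻¹' {(d : ℤ) * k + t}) =
        {pi | psum c pi.1 = t ∧ C pi.1 pi.2 = k + 1} := by
      ext pi
      rw [hlevel]
      simp only [Set.mem_ofPred_eq]
      tauto
    rw [hpre, multAt, if_neg (by omega)]
    rfl

end Chi

namespace IsAdmissible

variable {l d : ℕ} {c : Fin l → ℕ} {C Ct : Fin l → ℕ → ℤ}

lemma isPacked_chiSet (hl : 0 < l) (h : IsAdmissible d c C Ct) :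
    IsPacked (abacusLevel c) (chiSet l Ct) := by
  rintro _ ⟨p, i, rfl⟩ hz
  rw [add_sub_cancel_right, abacusLevel_mul_add_succ, left_eq_add, Nat.cast_eq_zero] at hz
  by_cases hp : (p : ℕ) = 0
  · obtain rfl : p = ⟨0, hl⟩ := Fin.ext hp
    obtain ⟨i', hi'⟩ := h.2.2.2 hl hz i
    refine ⟨⟨l - 1, by omega⟩, i', ?_⟩
    rw [hi', Nat.cast_sub hl]
    push_cast
    ring
  · obtain ⟨i', hi'⟩ := h.2.2.1 p hz hp i
    refine ⟨⟨(p : ℕ) - 1, by omega⟩, i', ?_⟩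
    rw [hi', Nat.cast_sub (by omega)]
    push_cast
    ring

lemma fiberCount_chiSet_eq (hl : 0 < l) (hc : ∑ j, c j = d) (hd : 0 < d)
    (hC : ∀ p, Function.Injective (C p)) (h : IsAdmissible d c C Ct) :
    fiberCount (abacusLevel c) (chiSet l Ct) = fiberCount (abacusLevel c) (chiSet l C) := by
  funext s
  obtain ⟨k, t, hs⟩ := exists_eq_mul_add hd (s - 1)
  rw [show s = d * k + (t + 1 : ℕ) by push_cast; omega,
    fiberCount_chiSet hl hc hd (fun p => (h.1 p).injective) (by omega) t.isLt k,
    fiberCount_chiSet hl hc hd hC (by omega) t.isLt k]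
  exact h.2.1 _ t.isLt _

end IsAdmissible

theorem statement1_general (l d : ℕ) (hl : 1 ≤ l) (hd : 1 ≤ d)
    (c : Fin l → ℕ) (hc : ∑ j, c j = d)
    (r : Fin l → ℤ)
    (w : Equiv.Perm (Fin l))
    (Λ : Fin l → PartitionSeq)
    (Ct : Fin l → ℕ → ℤ)
    (hCt : IsAdmissible d c (fun p => (Λ (w⁻¹ p)).beta (r p)) Ct)
    (ν μ : PartitionSeq)
    (hν : Set.range (ν.beta 0) = chiSet l (fun p => (Λ (w⁻¹ p)).beta (r p)))
    (hμ : Set.range (μ.beta 0) = chiSet l Ct) :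
    (∃ (k : ℕ) (seq : ℕ → PartitionSeq), seq 0 = ν ∧
        (∀ j < k, RemoveStep l {j : ℕ | ∃ hj : j < l, c ⟨j, hj⟩ = 0} (seq j) (seq (j + 1))) ∧
        ¬ ∃ ab : ℕ × ℕ,
            IsSetRemovable l {j : ℕ | ∃ hj : j < l, c ⟨j, hj⟩ = 0} (seq k) ab) ∧
    (∀ (k : ℕ) (seq : ℕ → PartitionSeq), seq 0 = ν →
        (∀ j < k, RemoveStep l {j : ℕ | ∃ hj : j < l, c ⟨j, hj⟩ = 0} (seq j) (seq (j + 1))) →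
        (¬ ∃ ab : ℕ × ℕ,
            IsSetRemovable l {j : ℕ | ∃ hj : j < l, c ⟨j, hj⟩ = 0} (seq k) ab) →
        seq k = μ) := by
  refine ⟨PartitionSeq.exists_removal_chain l _ ν, fun k seq h0 hsteps hterm => ?_⟩
  have hlevel := abacusLevel_sub_one_eq_iff (c := c) hl
  have hμ' : μ.betaSet = chiSet l Ct := hμ
  apply PartitionSeq.betaSet_injective
  refine IsPacked.eq_of_fiberCount_eq (abacusLevel_monotone hl)
    (finite_abacusLevel_preimage hl (hc ▸ hd))
    (PartitionSeq.isPacked_betaSet_of_terminal (fun z => (hlevel z).1) hterm)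
    (hμ' ▸ hCt.isPacked_chiSet hl) ?_
  rw [PartitionSeq.fiberCount_betaSet_of_chain (fun z => (hlevel z).2) hsteps, h0, hμ',
    PartitionSeq.betaSet, hν,
    hCt.fiberCount_chiSet_eq hl hc hd fun p => (PartitionSeq.beta_strictAnti_s1 _ _).injective]

/-- with `C = C(λ)`, `C̃` an admissible tuple for `C`, `ν` the partition
with `β(ν)` enumerating `χ(C)` and `μ` the partition with `β(μ)` enumerating `χ(C̃)`:
there is a finite sequence of deletions of `J`-removable nodes from `ν` terminating in a
partition without `J`-removable nodes, and every such sequence terminates in `μ`. -/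
theorem statement1 (l n d : ℕ) (hl : 1 ≤ l) (hd : 1 ≤ d)
    (c : Fin l → ℕ) (hc : ∑ j, c j = d)
    (r : Fin l → ℤ) (hr : ∑ j, r j = 0)
    (w : Equiv.Perm (Fin l))
    (Λ : Fin l → PartitionSeq) (hΛ : ∑ p, (Λ p).size = n)
    (Ct : Fin l → ℕ → ℤ)
    (hCt : IsAdmissible d c (fun p => (Λ (w⁻¹ p)).beta (r p)) Ct)
    (ν μ : PartitionSeq)
    (hν : Set.range (ν.beta 0) = chiSet l (fun p => (Λ (w⁻¹ p)).beta (r p)))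
    (hμ : Set.range (μ.beta 0) = chiSet l Ct) :
    (∃ (k : ℕ) (seq : ℕ → PartitionSeq), seq 0 = ν ∧
        (∀ j < k, RemoveStep l {j : ℕ | ∃ hj : j < l, c ⟨j, hj⟩ = 0} (seq j) (seq (j + 1))) ∧
        ¬ ∃ ab : ℕ × ℕ,
            IsSetRemovable l {j : ℕ | ∃ hj : j < l, c ⟨j, hj⟩ = 0} (seq k) ab) ∧
    (∀ (k : ℕ) (seq : ℕ → PartitionSeq), seq 0 = ν →
        (∀ j < k, RemoveStep l {j : ℕ | ∃ hj : j < l, c ⟨j, hj⟩ = 0} (seq j) (seq (j + 1))) →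
        (¬ ∃ ab : ℕ × ℕ,
            IsSetRemovable l {j : ℕ | ∃ hj : j < l, c ⟨j, hj⟩ = 0} (seq k) ab) →
        seq k = μ) :=
  statement1_general l d hl hd c hc r w Λ Ct hCt ν μ hν hμ
end

section
/- Fix integers l ≥ 1, d ≥ 1 and a tuple c = (c_0,…,c_{l−1}) of nonnegative integers with c_0+…+c_{l−1} = d; set J = {j ∈ {0,…,l−1} : c_j = 0}. Let C̃ = (C̃^0,…,C̃^{l−1}) be a tuple of strictly decreasing sequences of integers such that each C̃^p stabilises with respect to some integer ρ_p with ρ_0+…+ρ_{l−1} = 0, and such that: (iii) for every p ∈ J with p ≠ 0, every term of C̃^p is also a term of C̃^{p−1}; and (iv) if 0 ∈ J, then for every term z of C̃^0, z − 1 is a term of C̃^{l−1}. Let μ be the unique partition whose β-number β(μ) enumerates χ(C̃) in decreasing order. Then μ has no J-removable node. -/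
/-!
A removable node `(a, b)` of `μ` sits at the end of its row with `μ_{a+1} ≤ b`, so
`β(μ)_a = b - a + 1` is a β-number while `β(μ)_a - 1` is not. If `β(μ)_a = l (C̃^q_i - 1) + q + 1`,
the content `b - a` is `≡ q (mod l)`; for a `J`-removable node this forces `c_q = 0`, and then
(iii) (for `q ≠ 0`) or (iv) (for `q = 0`, wrapping round to `C̃^{l-1}`) put `β(μ)_a - 1` back
into `χ(C̃)`, a contradiction.
-/

namespace PartitionSeq

theorem beta_strictAnti_s2 (μ : PartitionSeq) (r : ℤ) : StrictAnti (μ.beta r) :=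
  strictAnti_nat_of_succ_lt fun n => by
    have := μ.antitone (Nat.le_add_right n 1)
    simp only [beta]
    push_cast
    omega

end PartitionSeq

namespace IsRemovableNode

variable {μ : PartitionSeq} {a b : ℕ}

theorem part_eq (h : IsRemovableNode μ (a, b)) : μ.part a = b + 1 := by
  obtain ⟨hab, μ', hμ'⟩ := h
  by_contra hne
  have hnext : (a, b + 1) ∈ YoungSet μ' := by
    rw [← hμ']
    exact ⟨show b + 1 < μ.part a by change b < μ.part a at hab; omega, by simp⟩
  have hmem : (a, b) ∈ YoungSet μ' := show b < μ'.part a from Nat.lt_of_succ_lt hnext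
  rw [← hμ'] at hmem
  exact hmem.2 rfl

theorem part_succ_le (h : IsRemovableNode μ (a, b)) : μ.part (a + 1) ≤ b := by
  obtain ⟨-, μ', hμ'⟩ := h
  by_contra! hlt
  have hbelow : (a + 1, b) ∈ YoungSet μ' := by
    rw [← hμ']
    exact ⟨hlt, by simp⟩
  have hmem : (a, b) ∈ YoungSet μ' :=
    show b < μ'.part a from lt_of_lt_of_le hbelow (μ'.antitone a.le_succ)
  rw [← hμ'] at hmem
  exact hmem.2 rfl

theorem beta_sub_one_notMem (h : IsRemovableNode μ (a, b)) (r : ℤ) :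
    μ.beta r a - 1 ∉ Set.range (μ.beta r) := by
  rintro ⟨i, hi⟩
  have hβ := μ.beta_strictAnti_s2 r
  have hpart := h.part_eq
  have hsucc := h.part_succ_le
  rcases le_or_gt i a with hia | hai
  · have := hβ.antitone hia
    omega
  · have hle := hβ.antitone (show a + 1 ≤ i from hai)
    simp only [PartitionSeq.beta] at hi hle
    push_cast at hi hle
    omega

end IsRemovableNode

theorem Fin.val_eq_of_mul_add_modEq {l : ℕ} (q : Fin l) {j : ℕ} (hj : j < l) (x : ℤ)
    (h : (l : ℤ) * x + q ≡ j [ZMOD l]) : (q : ℕ) = j := by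
  have hq := q.isLt
  unfold Int.ModEq at h
  rw [Int.mul_add_emod_self_left, Int.emod_eq_of_lt (by omega) (by omega),
    Int.emod_eq_of_lt (by omega) (by omega)] at h
  omega

theorem chiSet_mul_add_mem {l : ℕ} {c : Fin l → ℕ} {Ct : Fin l → ℕ → ℤ}
    (hiii : ∀ p : Fin l, c p = 0 → (p : ℕ) ≠ 0 →
        ∀ i : ℕ, ∃ i' : ℕ,
          Ct ⟨(p : ℕ) - 1, lt_of_le_of_lt (Nat.sub_le _ _) p.isLt⟩ i' = Ct p i)
    (hiv : ∀ h0 : 0 < l, c ⟨0, h0⟩ = 0 →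
        ∀ i : ℕ, ∃ i' : ℕ, Ct ⟨l - 1, Nat.sub_lt h0 Nat.one_pos⟩ i' = Ct ⟨0, h0⟩ i - 1)
    {q : Fin l} (hq : c q = 0) (i : ℕ) :
    (l : ℤ) * (Ct q i - 1) + q ∈ chiSet l Ct := by
  obtain ⟨q, hql⟩ := q
  rcases Nat.eq_zero_or_pos q with rfl | hq0
  · obtain ⟨i', hi'⟩ := hiv hql hq i
    refine ⟨⟨l - 1, by omega⟩, i', ?_⟩
    rw [hi']
    push_cast [Nat.cast_sub (show 1 ≤ l by omega)]
    ring
  · obtain ⟨i', hi'⟩ := hiii ⟨q, hql⟩ hq hq0.ne' i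
    refine ⟨⟨q - 1, by omega⟩, i', ?_⟩
    rw [hi']
    push_cast [Nat.cast_sub (show 1 ≤ q by omega)]
    ring

/-- if `C̃` is a tuple of strictly decreasing integer sequences stabilising
with respect to integers `ρ_p` summing to `0`, satisfying conditions (iii) and (iv), and
`μ` is the partition whose `β`-number enumerates `χ(C̃)`, then `μ` has no `J`-removable
node, where `J = {j : c_j = 0}`. -/
theorem statement2 (l : ℕ) (c : Fin l → ℕ) (Ct : Fin l → ℕ → ℤ)
    (hiii : ∀ p : Fin l, c p = 0 → (p : ℕ) ≠ 0 →
        ∀ i : ℕ, ∃ i' : ℕ,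
          Ct ⟨(p : ℕ) - 1, lt_of_le_of_lt (Nat.sub_le _ _) p.isLt⟩ i' = Ct p i)
    (hiv : ∀ h0 : 0 < l, c ⟨0, h0⟩ = 0 →
        ∀ i : ℕ, ∃ i' : ℕ, Ct ⟨l - 1, by omega⟩ i' = Ct ⟨0, h0⟩ i - 1)
    (μ : PartitionSeq) (hμ : Set.range (μ.beta 0) = chiSet l Ct) :
    ¬ ∃ ab : ℕ × ℕ, IsSetRemovable l {j : ℕ | ∃ hj : j < l, c ⟨j, hj⟩ = 0} μ ab := by
  rintro ⟨⟨a, b⟩, j, ⟨hjl, hcj⟩, hrem, hcont⟩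
  obtain ⟨q, i, hqi⟩ : μ.beta 0 a ∈ chiSet l Ct := hμ ▸ ⟨a, rfl⟩
  have hpred : μ.beta 0 a - 1 = (l : ℤ) * (Ct q i - 1) + q := by
    rw [hqi]
    ring
  have hcontent : μ.beta 0 a - 1 = (b : ℤ) - a := by
    simp only [PartitionSeq.beta, hrem.part_eq]
    push_cast
    ring
  have hqj : (q : ℕ) = j :=
    q.val_eq_of_mul_add_modEq hjl (Ct q i - 1) (by rwa [← hpred, hcontent])
  have hcq : c q = 0 := by
    rwa [show q = ⟨j, hjl⟩ from Fin.ext hqj]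
  apply hrem.beta_sub_one_notMem 0
  rw [hμ, hpred]
  exact chiSet_mul_add_mem hiii hiv hcq i
end

section
/- Fix integers l ≥ 1, d ≥ 1 and a tuple c = (c_0,…,c_{l−1}) of nonnegative integers with c_0+…+c_{l−1} = d; set m_p = c_0+…+c_p, J = {j : c_j = 0}, and I_t = {p : m_p = t} for 0 ≤ t ≤ d. Let C = (C^0,…,C^{l−1}) be an l-tuple of strictly decreasing sequences of integers such that C^p stabilises with respect to some integer r_p, for each p. Then there exists a tuple C̃ = (C̃^0,…,C̃^{l−1}) that is admissible for C. -/
/-!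
After shifting the sequences `C^p` with `p ∈ I_0` down by one, `C_{[t]}` is the multiset union
of the term sets of the `C^p` in the `t`-th block (`I_t`, with `I_0` merged into `I_d`).
Redistribute each such multiset column by column: order the members of a block and give its
`k`-th member the set of all `z` of multiplicity greater than `k`. These level sets have the
prescribed multiplicities, are nested along the order, which gives (iii) and (iv), and by
stabilisation each is bounded above and contains a whole ray `(-∞, B]`, so it is the set of
terms of a strictly decreasing sequence.
-/

open Finset

theorem Set.exists_strictAnti_range_eq {S : Set ℤ} (hS : BddAbove S) (hinf : S.Infinite) :
    ∃ e : ℕ → ℤ, StrictAnti e ∧ Set.range e = S := by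
  obtain ⟨M, hM⟩ := hS
  set T : Set ℕ := {k | M - k ∈ S}
  have hST : S = (fun k : ℕ => M - k) '' T := by
    ext z
    refine ⟨fun hz => ⟨(M - z).toNat, ?_, ?_⟩, ?_⟩
    · simpa [T, Int.toNat_of_nonneg (sub_nonneg.2 (hM hz))] using hz
    · simp [Int.toNat_of_nonneg (sub_nonneg.2 (hM hz))]
    · rintro ⟨k, hk, rfl⟩
      exact hk
  have hT : T.Infinite := fun hfin => hinf (hST ▸ hfin.image _)
  refine ⟨fun n => M - Nat.nth (· ∈ T) n, fun a b hab => ?_, ?_⟩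
  · simpa using Nat.nth_strictMono (p := (· ∈ T)) hT hab
  · rw [hST, Set.range_comp' (fun k : ℕ => M - k), Nat.range_nth_of_infinite (p := (· ∈ T)) hT]
    rfl

theorem Stabilises.Iic_subset_range {C : ℕ → ℤ} {r : ℤ} (h : Stabilises C r) :
    ∃ B, Set.Iic B ⊆ Set.range C := by
  obtain ⟨K, hK⟩ := h
  refine ⟨r - K, fun w hw => ⟨(r - w).toNat, ?_⟩⟩
  rw [Set.mem_Iic] at hw
  rw [hK _ (by omega)]
  omega

section Rank

variable {α β : Type*} [LinearOrder β] (s : Finset α) (f : α → β)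

theorem Finset.card_filter_lt_lt_card_filter_lt {a a' : α} (ha : a ∈ s) (h : f a < f a') :
    #{b ∈ s | f b < f a} < #{b ∈ s | f b < f a'} := by
  refine card_lt_card ⟨fun b hb => ?_, fun hsub => ?_⟩
  · simp only [mem_filter] at hb ⊢
    exact ⟨hb.1, hb.2.trans h⟩
  · simpa using hsub (mem_filter.2 ⟨ha, h⟩)

theorem Finset.card_filter_lt_lt_card {a : α} (ha : a ∈ s) : #{b ∈ s | f b < f a} < #s :=
  card_lt_card (filter_ssubset.2 ⟨a, ha, lt_irrefl _⟩)

/-- Ranking the elements of `s` by `f` hits each of `0, …, m - 1` exactly once. -/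
theorem Finset.card_filter_card_filter_lt_lt (hf : Set.InjOn f s) {m : ℕ} (hm : m ≤ #s) :
    #{a ∈ s | #{b ∈ s | f b < f a} < m} = m := by
  set rk : α → ℕ := fun a => #{b ∈ s | f b < f a}
  have hrk : Set.InjOn rk s := by
    intro a ha a' ha' h
    by_contra hne
    rcases lt_or_gt_of_ne (hf.ne ha ha' hne) with hlt | hlt
    · exact (card_filter_lt_lt_card_filter_lt s f ha hlt).ne h
    · exact (card_filter_lt_lt_card_filter_lt s f ha' hlt).ne h.symm
  have himage : s.image rk = range #s :=
    eq_of_subset_of_card_le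
      (fun j hj => by
        obtain ⟨a, ha, rfl⟩ := mem_image.1 hj
        exact mem_range.2 (card_filter_lt_lt_card s f ha))
      (by rw [card_range, card_image_of_injOn hrk])
  calc #{a ∈ s | rk a < m}
      = #({a ∈ s | rk a < m}.image rk) :=
        (card_image_of_injOn (hrk.mono (coe_subset.2 (filter_subset _ _)))).symm
    _ = #{j ∈ range #s | j < m} := by rw [← himage, filter_image]
    _ = #(range m) := by
        congr 1
        ext j
        simp only [mem_filter, mem_range]
        omega
    _ = m := card_range m

end Rank

theorem Nat.card_pairs_eq_card_filter_mem_range {ι : Type*} [Fintype ι] (P : ι → Prop)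
    (E : ι → ℕ → ℤ) (hE : ∀ p, Function.Injective (E p)) (z : ℤ)
    [DecidablePred fun p => P p ∧ z ∈ Set.range (E p)] :
    Nat.card {pi : ι × ℕ // P pi.1 ∧ E pi.1 pi.2 = z} = #{p | P p ∧ z ∈ Set.range (E p)} := by
  rw [← Fintype.card_subtype, ← Nat.card_eq_fintype_card]
  refine Nat.card_congr (Equiv.ofBijective (fun x => ⟨x.1.1, x.2.1, x.1.2, x.2.2⟩) ⟨?_, ?_⟩)
  · intro ⟨⟨p, i⟩, _, hi⟩ ⟨⟨q, j⟩, _, hj⟩ h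
    obtain rfl : p = q := congrArg Subtype.val h
    obtain rfl : i = j := hE p (hi.trans hj.symm)
    rfl
  · rintro ⟨p, hP, i, hi⟩
    exact ⟨⟨(p, i), hP, hi⟩, rfl⟩

section Psum

variable {l : ℕ} (c : Fin l → ℕ)

theorem psum_of_val_eq_zero {p : Fin l} (hp : (p : ℕ) = 0) : psum c p = c p := by
  have hIic : Iic p = {p} := by
    ext q
    simp only [mem_Iic, mem_singleton, Fin.le_def, Fin.ext_iff]
    omega
  rw [psum, hIic, sum_singleton]

theorem psum_of_val_eq_sub_one {p : Fin l} (hp : (p : ℕ) = l - 1) : psum c p = ∑ j, c j := by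
  have hIic : Iic p = univ := by
    ext q
    simp only [mem_Iic, mem_univ, iff_true, Fin.le_def]
    omega
  rw [psum, hIic]

theorem psum_add_of_val_add_one_eq {p q : Fin l} (h : (q : ℕ) + 1 = p) :
    psum c q + c p = psum c p := by
  have hIic : Iic p = insert p (Iic q) := by
    ext r
    simp only [mem_Iic, mem_insert, Fin.le_def, Fin.ext_iff]
    omega
  rw [psum, psum, hIic, sum_insert (by simp only [mem_Iic, Fin.le_def]; omega), add_comm]

end Psum

namespace Admissible

open scoped Classical

variable {l : ℕ} (d : ℕ) (c : Fin l → ℕ)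

/-- Block indices live in `{1, …, d}`: the index `0` is identified with `d`, as
`C_{[0]} = C_{[d]}`. -/
def foldZero (t : ℕ) : ℕ := if t = 0 then d else t

/-- Sequences indexed by `I_0` enter `C_{[0]}` shifted down by one. -/
def shift (p : Fin l) : ℤ := if psum c p = 0 then 1 else 0

def normalized (E : Fin l → ℕ → ℤ) (p : Fin l) (i : ℕ) : ℤ := E p i - shift c p

def block (p : Fin l) : ℕ := foldZero d (psum c p)

def blockMembers (t : ℕ) : Finset (Fin l) := {q | block d c q = t}

/-- The multiplicity of `z` in `C_{[t]}`, read through the normalized sequences. -/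
noncomputable def blockMult (E : Fin l → ℕ → ℤ) (t : ℕ) (z : ℤ) : ℕ :=
  #{q ∈ blockMembers d c t | z ∈ Set.range (normalized c E q)}

/-- Within the merged block `I_d ∪ I_0`, the members of `I_d` come first, so that
`l - 1` precedes `0`. -/
def blockOrder (p : Fin l) : ℕ := if psum c p = 0 then l + p else p

def rank (p : Fin l) : ℕ :=
  #{q ∈ blockMembers d c (block d c p) | blockOrder c q < blockOrder c p}

def levelSet (E : Fin l → ℕ → ℤ) (p : Fin l) : Set ℤ :=
  {z | rank d c p < blockMult d c E (block d c p) z}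

theorem blockOrder_injective : Function.Injective (blockOrder c) := by
  intro p q h
  have := p.isLt
  have := q.isLt
  simp only [blockOrder] at h
  split_ifs at h <;> omega

theorem multAt_eq_blockMult (hd : d ≠ 0) (E : Fin l → ℕ → ℤ) (hE : ∀ p, StrictAnti (E p))
    (t : ℕ) (z : ℤ) : multAt d c E t z = blockMult d c E (foldZero d t) z := by
  have hinj : ∀ p, Function.Injective (E p) := fun p => (hE p).injective
  rw [multAt, blockMult, blockMembers, filter_filter]
  split_ifs with ht
  · rw [Nat.card_pairs_eq_card_filter_mem_range (fun p => psum c p = 0) (fun p i => E p i - 1)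
        (fun p _ _ h => hinj p (sub_left_injective h)),
      Nat.card_pairs_eq_card_filter_mem_range (fun p => psum c p = d) E hinj,
      ← card_union_of_disjoint (disjoint_filter.2 fun p _ h0 hpd => hd (by rw [← h0.1, hpd.1])),
      ← filter_or]
    have hfold : foldZero d t = d := by rcases ht with rfl | rfl <;> simp [foldZero]
    congr 1
    refine filter_congr fun p _ => ?_
    rw [hfold]
    by_cases h0 : psum c p = 0 <;> simp [block, foldZero, normalized, shift, h0, hd.symm]
  · rw [Nat.card_pairs_eq_card_filter_mem_range (fun p => psum c p = t) E hinj]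
    congr 1
    refine filter_congr fun p _ => ?_
    by_cases h0 : psum c p = 0 <;> simp_all [block, foldZero, normalized, shift, eq_comm]

variable {d c}

theorem rank_lt_rank {p q : Fin l} (hb : block d c p = block d c q)
    (ho : blockOrder c p < blockOrder c q) : rank d c p < rank d c q := by
  rw [rank, rank, hb]
  exact card_filter_lt_lt_card_filter_lt _ _ (by simp [blockMembers, hb]) ho

theorem levelSet_subset_levelSet (E : Fin l → ℕ → ℤ) {p q : Fin l}
    (hb : block d c p = block d c q) (ho : blockOrder c p < blockOrder c q) :
    levelSet d c E q ⊆ levelSet d c E p := fun _ hz =>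
  (rank_lt_rank hb ho).trans (by simpa [levelSet, hb] using hz)

theorem blockMult_eq_of_range_eq_levelSet {C Ct : Fin l → ℕ → ℤ}
    (h : ∀ p, Set.range (normalized c Ct p) = levelSet d c C p) (t : ℕ) (z : ℤ) :
    blockMult d c Ct t z = blockMult d c C t z := by
  have hmembers : ∀ q ∈ blockMembers d c t,
      (z ∈ Set.range (normalized c Ct q) ↔
        #{q' ∈ blockMembers d c t | blockOrder c q' < blockOrder c q} < blockMult d c C t z) := by
    intro q hq
    rw [h q, levelSet, Set.mem_ofPred_eq, rank, (mem_filter.1 hq).2]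
  rw [blockMult, filter_congr hmembers]
  exact card_filter_card_filter_lt_lt _ _ (blockOrder_injective c).injOn (card_filter_le _ _)

theorem levelSet_bddAbove {E : Fin l → ℕ → ℤ} (hE : ∀ p, Antitone (E p)) (p : Fin l) :
    BddAbove (levelSet d c E p) := by
  obtain ⟨M, hM⟩ := (Set.finite_range fun q => normalized c E q 0).bddAbove
  refine ⟨M, fun z hz => ?_⟩
  obtain ⟨q, hq⟩ := card_pos.1 (Nat.zero_lt_of_lt hz)
  obtain ⟨-, i, rfl⟩ := mem_filter.1 hq
  exact (sub_le_sub_right (hE q (Nat.zero_le i)) _).trans (hM ⟨q, rfl⟩)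

theorem exists_Iic_subset_levelSet {E : Fin l → ℕ → ℤ} (hE : ∀ p, ∃ r, Stabilises (E p) r) :
    ∃ B, ∀ p, Set.Iic B ⊆ levelSet d c E p := by
  have hnorm : ∀ q, ∃ B, Set.Iic B ⊆ Set.range (normalized c E q) := fun q => by
    obtain ⟨r, K, hK⟩ := hE q
    exact Stabilises.Iic_subset_range (r := r - shift c q)
      ⟨K, fun i hi => by rw [normalized, hK i hi, sub_right_comm]⟩
  choose B hB using hnorm
  obtain ⟨b, hb⟩ := (Set.finite_range B).bddBelow
  refine ⟨b, fun p z hz => ?_⟩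
  have hall : blockMult d c E (block d c p) z = #(blockMembers d c (block d c p)) :=
    congrArg card (filter_true_of_mem fun q _ => hB q ((Set.Iic_subset_Iic.2 (hb ⟨q, rfl⟩)) hz))
  simp only [levelSet, Set.mem_ofPred_eq, hall, rank]
  exact card_filter_lt_lt_card _ _ (by simp [blockMembers])

theorem exists_normalized_eq_of_range_eq_levelSet {C Ct : Fin l → ℕ → ℤ}
    (h : ∀ p, Set.range (normalized c Ct p) = levelSet d c C p) {p q : Fin l}
    (hb : block d c p = block d c q) (ho : blockOrder c p < blockOrder c q) (i : ℕ) :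
    ∃ i', normalized c Ct p i' = normalized c Ct q i := by
  rw [← Set.mem_range, h]
  exact levelSet_subset_levelSet C hb ho (h q ▸ ⟨i, rfl⟩)

theorem block_of_val_add_one_eq {p q : Fin l} (hcp : c p = 0) (h : (q : ℕ) + 1 = p) :
    block d c q = block d c p ∧ blockOrder c q < blockOrder c p ∧ shift c q = shift c p := by
  have hpsum := psum_add_of_val_add_one_eq c h
  rw [hcp, add_zero] at hpsum
  refine ⟨by rw [block, block, hpsum], ?_, by rw [shift, shift, hpsum]⟩
  simp only [blockOrder, hpsum]
  split_ifs <;> omega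

theorem block_of_val_eq_sub_one (hd : d ≠ 0) (hc : ∑ j, c j = d) {p q : Fin l}
    (hp : (p : ℕ) = 0) (hcp : c p = 0) (hq : (q : ℕ) = l - 1) :
    block d c q = block d c p ∧ blockOrder c q < blockOrder c p ∧
      shift c q = 0 ∧ shift c p = 1 := by
  have hq_psum : psum c q = d := (psum_of_val_eq_sub_one c hq).trans hc
  have hp_psum : psum c p = 0 := (psum_of_val_eq_zero c hp).trans hcp
  simp only [block, blockOrder, shift, foldZero, hq_psum, hp_psum, hd, if_false, if_true,
    true_and, and_true]
  omega

end Admissible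

open Admissible in
theorem statement4_general (l d : ℕ) (hd : 1 ≤ d)
    (c : Fin l → ℕ) (hc : ∑ j, c j = d)
    (C : Fin l → ℕ → ℤ)
    (hdec : ∀ p, StrictAnti (C p))
    (hstab : ∀ p, ∃ rp : ℤ, Stabilises (C p) rp) :
    ∃ Ct : Fin l → ℕ → ℤ, IsAdmissible d c C Ct := by
  have hd0 : d ≠ 0 := Nat.one_le_iff_ne_zero.1 hd
  obtain ⟨B, hB⟩ := exists_Iic_subset_levelSet (d := d) (c := c) hstab
  choose e he_anti he_range using fun p => Set.exists_strictAnti_range_eq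
    (levelSet_bddAbove (fun q => (hdec q).antitone) p) ((Set.Iic_infinite B).mono (hB p))
  let Ct : Fin l → ℕ → ℤ := fun p i => e p i + shift c p
  have hCt : ∀ p, Set.range (normalized c Ct p) = levelSet d c C p := fun p => by
    rw [← he_range]
    exact congrArg Set.range (funext fun i => add_sub_cancel_right (e p i) (shift c p))
  have hCt_anti : ∀ p, StrictAnti (Ct p) := fun p _ _ h => add_lt_add_left (he_anti p h) _
  refine ⟨Ct, hCt_anti, fun t _ z => ?_, fun p hcp hp i => ?_, fun h0 hc0 i => ?_⟩
  · rw [multAt_eq_blockMult d c hd0 Ct hCt_anti, multAt_eq_blockMult d c hd0 C hdec,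
      blockMult_eq_of_range_eq_levelSet hCt]
  · obtain ⟨hb, ho, hs⟩ := block_of_val_add_one_eq (q := ⟨p - 1, _⟩) hcp (by simp; omega)
    obtain ⟨i', hi'⟩ := exists_normalized_eq_of_range_eq_levelSet hCt hb ho i
    exact ⟨i', by simpa [normalized, hs] using hi'⟩
  · obtain ⟨hb, ho, hs_last, hs_zero⟩ :=
      block_of_val_eq_sub_one hd0 hc (q := ⟨l - 1, _⟩) rfl hc0 rfl
    obtain ⟨i', hi'⟩ := exists_normalized_eq_of_range_eq_levelSet hCt hb ho i
    exact ⟨i', by simpa [normalized, hs_last, hs_zero] using hi'⟩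

/-- for any `l`-tuple `C` of strictly decreasing integer sequences, each
stabilising with respect to some integer, there exists an admissible tuple for `C`. -/
theorem statement4 (l d : ℕ) (hl : 1 ≤ l) (hd : 1 ≤ d)
    (c : Fin l → ℕ) (hc : ∑ j, c j = d)
    (C : Fin l → ℕ → ℤ)
    (hdec : ∀ p, StrictAnti (C p))
    (hstab : ∀ p, ∃ rp : ℤ, Stabilises (C p) rp) :
    ∃ Ct : Fin l → ℕ → ℤ, IsAdmissible d c C Ct :=
  statement4_general l d hd c hc C hdec hstab
end

section
/- Let I be a finite index set, d ≥ 1 an integer, and for each p ∈ I let λ_p and μ_p be partitions and r_p ∈ ℤ. Let K be an integer with K ≥ L(λ_p) and K ≥ L(μ_p) for all p ∈ I. Then in ℤ[x, x^{−1}]: Σ_{p∈I} Σ_{i=1}^{K} x^{d·β^{r_p}(λ_p)_i} = Σ_{p∈I} Σ_{i=1}^{K} x^{d·β^{r_p}(μ_p)_i} holds if and only if Σ_{p∈I} x^{d·r_p}·Res_{λ_p}(x^d) = Σ_{p∈I} x^{d·r_p}·Res_{μ_p}(x^d), where Res_ν(x^d) denotes the image of Res_ν(x) under the substitution x ↦ x^d.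 -/
open Finset LaurentPolynomial

theorem LaurentPolynomial.T_mul_add_sub_T {R : Type*} [CommRing R] (d s : ℤ) (n : ℕ) :
    (T (d * (n + s)) : R[T;T⁻¹]) - T (d * s) = (T d - 1) * ∑ b ∈ range n, T (d * (b + s)) := by
  have hT : ∀ b : ℕ, (T (d * (b + s)) : R[T;T⁻¹]) = T d ^ b * T (d * s) := fun b => by
    rw [T_pow, ← T_add]; ring_nf
  simp_rw [hT]
  rw [← sum_mul, ← mul_assoc, mul_geom_sum, sub_mul, one_mul]

theorem LaurentPolynomial.T_sub_one_ne_zero {R : Type*} [CommRing R] [Nontrivial R] {d : ℤ}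
    (hd : d ≠ 0) : (T d - 1 : R[T;T⁻¹]) ≠ 0 := by
  rw [sub_ne_zero, ← T_zero]
  intro h
  have hcoeff := congrArg (fun f : R[T;T⁻¹] => f.coeff d) h
  simp only [T_apply, if_pos, if_neg (Ne.symm hd)] at hcoeff
  exact one_ne_zero hcoeff

namespace PartitionSeq

theorem part_eq_zero_of_length_le_s15 (lam : PartitionSeq) {i : ℕ} (hi : lam.length ≤ i) :
    lam.part i = 0 := by
  by_contra h
  obtain ⟨N, hN⟩ := lam.eventually_zero
  have hfin : {j | lam.part j ≠ 0}.Finite :=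
    (Set.finite_Iio N).subset fun j hj => Set.mem_Iio.2 (by by_contra! hjN; exact hj (hN j hjN))
  have hsub : Set.Iic i ⊆ {j | lam.part j ≠ 0} := fun j hj hz =>
    h (Nat.eq_zero_of_le_zero (hz ▸ lam.antitone hj))
  have hcard := Set.ncard_le_ncard hsub hfin
  rw [← coe_Iic, Set.ncard_coe_finset, Nat.card_Iic] at hcard
  exact absurd hi (by unfold length; omega)

theorem sum_range_T_beta (lam : PartitionSeq) (r : ℤ) (d : ℕ) {K : ℕ} (hK : lam.length ≤ K) :
    ∑ i ∈ range K, (T (d * lam.beta r i) : ℤ[T;T⁻¹]) =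
      ∑ i ∈ range K, T (d * (r - i)) + (T d - 1) * (T (d * r) * lam.residuePow d) := by
  have hterm : ∀ i : ℕ, (T (d * lam.beta r i) : ℤ[T;T⁻¹]) =
      T (d * (r - i)) + (T d - 1) * ∑ b ∈ range (lam.part i), T (d * (b + (r - i))) := by
    intro i
    rw [← T_mul_add_sub_T, beta, add_sub_cancel, add_sub_assoc]
  have hres : T (d * r) * lam.residuePow d =
      ∑ i ∈ range K, ∑ b ∈ range (lam.part i), (T (d * (b + (r - i))) : ℤ[T;T⁻¹]) := by
    rw [residuePow, mul_sum]
    refine sum_subset (range_subset_range.2 hK) (fun i _ hi => ?_) |>.trans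
      (sum_congr rfl fun i _ => ?_)
    · rw [lam.part_eq_zero_of_length_le_s15 (by simpa using hi), range_zero, sum_empty, mul_zero]
    · rw [mul_sum]
      exact sum_congr rfl fun b _ => by rw [← T_add]; ring_nf
  rw [hres, mul_sum, ← sum_add_distrib]
  exact sum_congr rfl fun i _ => hterm i

end PartitionSeq

/-- for a finite index set `I`, partitions `λ_p, μ_p`, shifts `r_p` and
`K ≥ L(λ_p), L(μ_p)` for all `p`:
`Σ_{p∈I} Σ_{i=1}^{K} x^{d·β^{r_p}(λ_p)_i} = Σ_{p∈I} Σ_{i=1}^{K} x^{d·β^{r_p}(μ_p)_i}`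
iff `Σ_{p∈I} x^{d·r_p}·Res_{λ_p}(x^d) = Σ_{p∈I} x^{d·r_p}·Res_{μ_p}(x^d)`. -/
theorem statement15 (ι : Type) [Fintype ι] (d : ℕ) (hd : 1 ≤ d)
    (lam mu : ι → PartitionSeq) (r : ι → ℤ) (K : ℕ)
    (hKl : ∀ p, (lam p).length ≤ K) (hKm : ∀ p, (mu p).length ≤ K) :
    ((∑ p : ι, ∑ i ∈ Finset.range K,
        (LaurentPolynomial.T ((d : ℤ) * (lam p).beta (r p) i) : LaurentPolynomial ℤ)) =
      ∑ p : ι, ∑ i ∈ Finset.range K,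
        LaurentPolynomial.T ((d : ℤ) * (mu p).beta (r p) i)) ↔
    ((∑ p : ι, LaurentPolynomial.T ((d : ℤ) * r p) * (lam p).residuePow d) =
      ∑ p : ι, LaurentPolynomial.T ((d : ℤ) * r p) * (mu p).residuePow d) := by
  have hD : (T (d : ℤ) - 1 : ℤ[T;T⁻¹]) ≠ 0 := T_sub_one_ne_zero (by omega)
  rw [sum_congr rfl fun p _ => (lam p).sum_range_T_beta (r p) d (hKl p),
    sum_congr rfl fun p _ => (mu p).sum_range_T_beta (r p) d (hKm p),
    sum_add_distrib, sum_add_distrib, ← mul_sum, ← mul_sum, add_right_inj, mul_right_inj' hD]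
end
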